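/- arXiv:2310.17610 — 2 statements merged into one kernel-verified Lean document; each statement's English description precedes it below -/
import Mathlib

section
/- Let f : ℝ^d → ℝ be a convex continuously differentiable function which attains its infimum at some x* ∈ ℝ^d, and let x : [0,∞) → ℝ^d be a gradient flow of f. Then lim_{t→∞} t·(f(x(t)) − inf_{y ∈ ℝ^d} f(y)) = 0. -/
/-!
Along the flow, `f ∘ x` is nonincreasing since `(f ∘ x)' = -‖∇f(x)‖²`, and convexity gives
`(‖x - x*‖²)' = -2⟪∇f(x), x - x*⟫ ≤ -2 (f(x) - f(x*))`, so `φ t = f (x t) - f x*` is a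
nonnegative, nonincreasing function with `∫₀^∞ φ ≤ ‖x 0 - x*‖² / 2`. Monotonicity gives
`∫_t^{2t} φ ≤ t φ t ≤ 2 ∫_{t/2}^t φ`, and both bounds are tails of a convergent integral.
-/

open Filter MeasureTheory Set Topology InnerProductSpace

theorem ConvexOn.add_fderiv_sub_le {E : Type*} [NormedAddCommGroup E] [NormedSpace ℝ E]
    {f : E → ℝ} {f' : E →L[ℝ] ℝ} (hconv : ConvexOn ℝ univ f) {y : E}
    (hf : HasFDerivAt f f' y) (z : E) :
    f y + f' (z - y) ≤ f z := by
  set ℓ : ℝ →ᵃ[ℝ] E := AffineMap.lineMap y z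
  have hderiv : HasDerivAt (f ∘ ℓ) (f' (z - y)) 0 :=
    hf.comp_hasDerivAt_of_eq 0 AffineMap.hasDerivAt_lineMap (by simp [ℓ])
  have hslope := (hconv.comp_affineMap ℓ).le_slope_of_hasDerivAt
    (mem_univ 0) (mem_univ 1) zero_lt_one hderiv
  simp only [slope_def_field, Function.comp_apply, AffineMap.lineMap_apply_one,
    AffineMap.lineMap_apply_zero, sub_zero, div_one, ℓ] at hslope
  linarith

section Antitone

variable {φ : ℝ → ℝ}

theorem AntitoneOn.intervalIntegrable_of_nonneg_endpoints (hanti : AntitoneOn φ (Ici 0)) {a b : ℝ}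
    (ha : 0 ≤ a) (hb : 0 ≤ b) : IntervalIntegrable φ volume a b :=
  (hanti.mono fun _ ht => mem_Ici.2 (le_trans (le_min ha hb) ht.1)).intervalIntegrable

theorem AntitoneOn.sub_mul_le_intervalIntegral (hanti : AntitoneOn φ (Ici 0)) {a b : ℝ}
    (ha : 0 ≤ a) (hab : a ≤ b) : (b - a) * φ b ≤ ∫ t in a..b, φ t := by
  have hb : 0 ≤ b := ha.trans hab
  simpa using intervalIntegral.integral_mono_on hab intervalIntegrable_const
    (hanti.intervalIntegrable_of_nonneg_endpoints ha hb)
    (fun t ht => hanti (mem_Ici.2 (ha.trans ht.1)) (mem_Ici.2 hb) ht.2)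

theorem AntitoneOn.intervalIntegral_le_sub_mul (hanti : AntitoneOn φ (Ici 0)) {a b : ℝ}
    (ha : 0 ≤ a) (hab : a ≤ b) : ∫ t in a..b, φ t ≤ (b - a) * φ a := by
  simpa using intervalIntegral.integral_mono_on hab
    (hanti.intervalIntegrable_of_nonneg_endpoints ha (ha.trans hab)) intervalIntegrable_const
    (fun t ht => hanti (mem_Ici.2 ha) (mem_Ici.2 (ha.trans ht.1)) ht.1)

theorem AntitoneOn.integrableOn_Ioi_of_intervalIntegral_le {C : ℝ}
    (hanti : AntitoneOn φ (Ici 0)) (hnonneg : ∀ t ∈ Ici 0, 0 ≤ φ t)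
    (hbdd : ∀ T, 0 ≤ T → ∫ t in 0..T, φ t ≤ C) :
    IntegrableOn φ (Ioi 0) := by
  refine integrableOn_Ioi_of_intervalIntegral_norm_bounded C 0 (b := id)
    (fun T => ((hanti.mono Icc_subset_Ici_self).integrableOn_isCompact isCompact_Icc).mono_set
      Ioc_subset_Icc_self) tendsto_id ?_
  filter_upwards [eventually_ge_atTop 0] with T hT
  rw [id, intervalIntegral.integral_congr fun t ht => Real.norm_of_nonneg
    (hnonneg t (Icc_subset_Ici_self ((uIcc_of_le hT).subset ht)))]
  exact hbdd T hT

theorem AntitoneOn.tendsto_mul_atTop_of_integrableOn (hanti : AntitoneOn φ (Ici 0))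
    (hint : IntegrableOn φ (Ioi 0)) :
    Tendsto (fun t => t * φ t) atTop (𝓝 0) := by
  have hprimitive := intervalIntegral_tendsto_integral_Ioi 0 hint tendsto_id
  have htail : ∀ {a b : ℝ → ℝ}, Tendsto a atTop atTop → Tendsto b atTop atTop →
      Tendsto (fun T => ∫ t in a T..b T, φ t) atTop (𝓝 0) := by
    intro a b ha hb
    have hdiff := (hprimitive.comp hb).sub (hprimitive.comp ha)
    rw [sub_self] at hdiff
    refine hdiff.congr' ?_
    filter_upwards [ha.eventually_ge_atTop 0, hb.eventually_ge_atTop 0] with T haT hbT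
    exact intervalIntegral.integral_interval_sub_left
      (hanti.intervalIntegrable_of_nonneg_endpoints le_rfl hbT) (hanti.intervalIntegrable_of_nonneg_endpoints le_rfl haT)
  have hlower := htail tendsto_id (tendsto_id.const_mul_atTop two_pos)
  have hupper := (htail (tendsto_id.atTop_div_const two_pos) tendsto_id).const_mul 2
  rw [mul_zero] at hupper
  refine tendsto_of_tendsto_of_tendsto_of_le_of_le' hlower hupper ?_ ?_
  · filter_upwards [eventually_ge_atTop 0] with T hT
    have := hanti.intervalIntegral_le_sub_mul hT (by linarith : T ≤ 2 * T)
    simp only [id] at this ⊢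
    linarith
  · filter_upwards [eventually_ge_atTop 0] with T hT
    have := hanti.sub_mul_le_intervalIntegral (by linarith : 0 ≤ T / 2) (by linarith : T / 2 ≤ T)
    simp only [id] at this ⊢
    linarith

end Antitone

theorem antitoneOn_Ici_of_hasDerivWithinAt_nonpos {g g' : ℝ → ℝ} {a : ℝ}
    (hg : ∀ t ∈ Ici a, HasDerivWithinAt g (g' t) (Ici a) t) (hg' : ∀ t ∈ Ici a, g' t ≤ 0) :
    AntitoneOn g (Ici a) := by
  refine antitoneOn_of_hasDerivWithinAt_nonpos (convex_Ici a)
    (fun t ht => (hg t ht).continuousWithinAt) (fun t ht => ?_) (fun t ht => hg' t ?_)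
  · rw [interior_Ici] at ht ⊢
    exact ((hg t (Ioi_subset_Ici_self ht)).hasDerivAt (Ici_mem_nhds ht)).hasDerivWithinAt
  · exact interior_subset ht

section GradientFlow

variable {E : Type*} [NormedAddCommGroup E] [InnerProductSpace ℝ E] [CompleteSpace E]
  {f : E → ℝ}

theorem ConvexOn.sub_le_inner_gradient (hconv : ConvexOn ℝ univ f) {y : E}
    (hf : DifferentiableAt ℝ f y) (z : E) :
    f y - f z ≤ inner ℝ (gradient f y) (y - z) := by
  have := hconv.add_fderiv_sub_le hf.hasGradientAt.hasFDerivAt z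
  rw [toDual_apply_apply, ← neg_sub, inner_neg_right] at this
  linarith

def IsGradientFlow (f : E → ℝ) (x : ℝ → E) : Prop :=
  ∀ t ∈ Ici (0 : ℝ), HasDerivWithinAt x (-(gradient f (x t))) (Ici 0) t

namespace IsGradientFlow

variable {x : ℝ → E}

theorem continuousOn (hx : IsGradientFlow f x) : ContinuousOn x (Ici 0) :=
  fun t ht => (hx t ht).continuousWithinAt

theorem hasDerivWithinAt_comp (hx : IsGradientFlow f x) (hf : Differentiable ℝ f) {t : ℝ}
    (ht : t ∈ Ici 0) :
    HasDerivWithinAt (f ∘ x) (-‖gradient f (x t)‖ ^ 2) (Ici 0) t := by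
  simpa only [toDual_apply_apply, inner_neg_right, real_inner_self_eq_norm_sq] using
    (hf (x t)).hasGradientAt.hasFDerivAt.comp_hasDerivWithinAt t (hx t ht)

theorem antitoneOn_comp (hx : IsGradientFlow f x) (hf : Differentiable ℝ f) :
    AntitoneOn (f ∘ x) (Ici 0) :=
  antitoneOn_Ici_of_hasDerivWithinAt_nonpos (fun _ ht => hx.hasDerivWithinAt_comp hf ht)
    (fun _ _ => neg_nonpos.2 (sq_nonneg _))

theorem two_mul_integral_sub_le (hx : IsGradientFlow f x) (hconv : ConvexOn ℝ univ f)
    (hf : Differentiable ℝ f) (z : E) {T : ℝ} (hT : 0 ≤ T) :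
    2 * ∫ t in 0..T, (f (x t) - f z) ≤ ‖x 0 - z‖ ^ 2 := by
  have hsub : Icc 0 T ⊆ Ici 0 := Icc_subset_Ici_self
  have hcont : ContinuousOn (fun t => f (x t) - f z) (Ici 0) :=
    (hf.continuous.comp_continuousOn hx.continuousOn).sub continuousOn_const
  have hdist := intervalIntegral.sub_le_integral_of_hasDeriv_right_of_le hT
    (g := fun t => ‖x t - z‖ ^ 2) (φ := fun t => -2 * (f (x t) - f z))
    (((hx.continuousOn.sub continuousOn_const).norm.pow 2).mono hsub)
    (fun t ht => (((hx t (mem_Ici.2 ht.1.le)).sub_const z).norm_sq.hasDerivAt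
      (Ici_mem_nhds ht.1)).hasDerivWithinAt)
    ((hcont.mono hsub).integrableOn_Icc.const_mul (-2))
    (fun t _ => by
      have := hconv.sub_le_inner_gradient (hf (x t)) z
      rw [inner_neg_right, real_inner_comm]
      linarith)
  rw [intervalIntegral.integral_const_mul] at hdist
  linarith [sq_nonneg ‖x T - z‖]

end IsGradientFlow

end GradientFlow

/-- For a convex C¹ function `f : ℝ^d → ℝ` attaining its infimum at `x*`
and a gradient flow `x` of `f`, one has `t·(f(x(t)) − inf f) → 0` as `t → ∞`. -/
theorem gradient_flow_little_o_one_over_t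
    (d : ℕ) (f : EuclideanSpace ℝ (Fin d) → ℝ)
    (hconv : ConvexOn ℝ Set.univ f) (hf : ContDiff ℝ 1 f)
    (xstar : EuclideanSpace ℝ (Fin d)) (hmin : ∀ y, f xstar ≤ f y)
    (x : ℝ → EuclideanSpace ℝ (Fin d))
    (hx : ∀ t ∈ Set.Ici (0:ℝ),
      HasDerivWithinAt x (-(gradient f (x t))) (Set.Ici 0) t) :
    Filter.Tendsto (fun t : ℝ => t * (f (x t) - f xstar)) Filter.atTop (nhds 0) := by
  have hflow : IsGradientFlow f x := hx
  have hfd : Differentiable ℝ f := hf.differentiable one_ne_zero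
  have hanti : AntitoneOn (fun t => f (x t) - f xstar) (Ici 0) :=
    fun a ha b hb hab => sub_le_sub_right (hflow.antitoneOn_comp hfd ha hb hab) _
  refine hanti.tendsto_mul_atTop_of_integrableOn
    (hanti.integrableOn_Ioi_of_intervalIntegral_le (C := ‖x 0 - xstar‖ ^ 2 / 2)
      (fun t _ => sub_nonneg.2 (hmin _)) (fun T hT => ?_))
  linarith [hflow.two_mul_integral_sub_le hconv hfd xstar hT]
end

section
/- Let H be a real Hilbert space, f : H → ℝ a convex differentiable function, and x* ∈ H a point with f(x*) = inf_{y ∈ H} f(y). Let α > 3 and let x : (0,∞) → H be a twice differentiable solution of the heavy ball ODE x''(t) = −(α/t)·x'(t) − ∇f(x(t)) with initial behavior lim_{t→0⁺} x(t) = x₀ and lim_{t→0⁺} t·x'(t) = 0. Then ∫₀^∞ t·(f(x(t)) − f(x*)) dt ≤ (α−1)²·‖x₀ − x*‖² / (2·(α−3)). -/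
/-!
Along a trajectory, the Su–Boyd–Candès energy
`E(t) = t² (f(x t) - f x*) + ½ ‖(α - 1)(x t - x*) + t x'(t)‖²`
satisfies `E'(t) = t (2 (f(x t) - f x*) - (α - 1) ⟪∇f(x t), x t - x*⟫)`, because the ODE makes the
derivative of `(α - 1)(x - x*) + t x'` equal to `-t ∇f(x)`. Convexity gives
`f(x t) - f x* ≤ ⟪∇f(x t), x t - x*⟫`, hence `E' ≤ -(α - 3) t (f(x t) - f x*)`. Integrating on
`[ε, T]` and using `E ≥ 0` bounds `(α - 3) ∫_ε^T t (f(x t) - f x*) dt` by `E(ε)`, which tends to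
`½ (α - 1)² ‖x₀ - x*‖²` as `ε → 0⁺`; monotone convergence then bounds the integral over `(0, ∞)`.
-/

open Filter MeasureTheory Set Topology
open scoped RealInnerProductSpace

theorem ConvexOn.add_fderiv_sub_le_s18 {E : Type*} [NormedAddCommGroup E] [NormedSpace ℝ E]
    {s : Set E} {f : E → ℝ} (hf : ConvexOn ℝ s f) {a b : E} (ha : a ∈ s) (hb : b ∈ s)
    (hfa : DifferentiableAt ℝ f a) : f a + fderiv ℝ f a (b - a) ≤ f b := by
  have hline : HasDerivAt (f ∘ AffineMap.lineMap a b) (fderiv ℝ f a (b - a)) (0 : ℝ) :=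
    hfa.hasFDerivAt.comp_hasDerivAt_of_eq (0 : ℝ) AffineMap.hasDerivAt_lineMap
      (AffineMap.lineMap_apply_zero a b).symm
  have := (hf.comp_affineMap (AffineMap.lineMap a b)).le_slope_of_hasDerivAt
    (by simpa using ha) (by simpa using hb) one_pos hline
  simp only [map_sub, slope, sub_zero, inv_one, Function.comp_apply, AffineMap.lineMap_apply_one,
    AffineMap.lineMap_apply_zero, vsub_eq_sub, smul_eq_mul, one_mul, tsub_le_iff_right] at this
  rw [map_sub]
  linarith

theorem ConvexOn.sub_le_inner_gradient_sub {H : Type*} [NormedAddCommGroup H]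
    [InnerProductSpace ℝ H] [CompleteSpace H] {s : Set H} {f : H → ℝ} (hf : ConvexOn ℝ s f)
    {a b : H} (ha : a ∈ s) (hb : b ∈ s) (hfa : DifferentiableAt ℝ f a) :
    f a - f b ≤ ⟪gradient f a, a - b⟫ := by
  have := hf.add_fderiv_sub_le_s18 ha hb hfa
  rw [← inner_gradient_left, ← neg_sub, inner_neg_right] at this
  linarith

theorem intervalIntegral_le_of_hasDerivAt_le_neg_of_tendsto {E E' φ : ℝ → ℝ} {L : ℝ}
    (hE : ∀ t > 0, HasDerivAt E (E' t) t) (hE' : ∀ t > 0, E' t ≤ -φ t)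
    (hφ : ContinuousOn φ (Ioi 0)) (hφ0 : ∀ t > 0, 0 ≤ φ t) (hE0 : ∀ t > 0, 0 ≤ E t)
    (hL : Tendsto E (𝓝[>] 0) (𝓝 L)) {a b : ℝ} (ha : 0 < a) (hab : a ≤ b) :
    ∫ t in a..b, φ t ≤ L := by
  refine ge_of_tendsto hL ?_
  filter_upwards [Ioc_mem_nhdsGT ha] with ε ⟨hε, hεa⟩
  have hεb : Icc ε b ⊆ Ioi 0 := fun t ht => hε.trans_le ht.1
  calc ∫ t in a..b, φ t ≤ ∫ t in ε..b, φ t := by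
        refine intervalIntegral.integral_mono_interval hεa hab le_rfl ?_
          ((hφ.mono hεb).intervalIntegrable_of_Icc (hεa.trans hab))
        filter_upwards [ae_restrict_mem measurableSet_Ioc] with t ht
        exact hφ0 t (hε.trans ht.1)
    _ ≤ -E b - -E ε := by
        refine intervalIntegral.integral_le_sub_of_hasDeriv_right_of_le (hεa.trans hab)
          (fun t ht => (hE t (hεb ht)).continuousAt.continuousWithinAt.neg)
          (fun t ht => (hE t (hεb (Ioo_subset_Icc_self ht))).neg.hasDerivWithinAt)
          ((hφ.mono hεb).integrableOn_Icc) (fun t ht => ?_)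
        exact le_neg_of_le_neg (hE' t (hεb (Ioo_subset_Icc_self ht)))
    _ ≤ E ε := by linarith [hE0 b (hε.trans_le (hεa.trans hab))]

theorem lintegral_Ioi_ofReal_le_of_intervalIntegral_le {φ : ℝ → ℝ} {L : ℝ}
    (hφ : ContinuousOn φ (Ioi 0)) (hφ0 : ∀ t > 0, 0 ≤ φ t)
    (hbound : ∀ a b, 0 < a → a ≤ b → ∫ t in a..b, φ t ≤ L) :
    ∫⁻ t in Ioi 0, ENNReal.ofReal (φ t) ≤ ENNReal.ofReal L := by
  set a : ℕ → ℝ := fun n => 1 / ((n : ℝ) + 1)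
  set b : ℕ → ℝ := fun n => (n : ℝ) + 1
  have hcover : AECover (volume.restrict (Ioi 0)) atTop fun n => Ioi (a n) ∩ Iic (b n) :=
    (aecover_Ioi_of_Ioi tendsto_one_div_add_atTop_nhds_zero_nat).inter
      (aecover_Iic (tendsto_atTop_add_const_right _ 1 tendsto_natCast_atTop_atTop))
  refine le_of_tendsto' (hcover.lintegral_tendsto_of_countably_generated
    (hφ.aemeasurable measurableSet_Ioi).ennreal_ofReal) fun n => ?_
  have ha : 0 < a n := by positivity
  have hab : a n ≤ b n := by
    simp only [a, b]
    rw [div_le_iff₀ (by positivity)]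
    nlinarith [(n.cast_nonneg : (0 : ℝ) ≤ n)]
  have hsub : Icc (a n) (b n) ⊆ Ioi 0 := fun t ht => ha.trans_le ht.1
  rw [Measure.restrict_restrict (measurableSet_Ioi.inter measurableSet_Iic), Ioi_inter_Iic,
    inter_eq_left.2 (Ioc_subset_Icc_self.trans hsub),
    ← ofReal_integral_eq_lintegral_ofReal
      ((hφ.mono hsub).integrableOn_Icc.mono_set Ioc_subset_Icc_self)
      ((ae_restrict_mem measurableSet_Ioc).mono fun t ht => hφ0 t (ha.trans ht.1)),
    ← intervalIntegral.integral_of_le hab]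
  exact ENNReal.ofReal_le_ofReal (hbound _ _ ha hab)

section HeavyBall

variable {H : Type*} [NormedAddCommGroup H] [InnerProductSpace ℝ H]

def heavyBallAnchor (α : ℝ) (xstar : H) (x v : ℝ → H) (t : ℝ) : H :=
  (α - 1) • (x t - xstar) + t • v t

noncomputable def heavyBallEnergy [CompleteSpace H] (f : H → ℝ) (xstar : H) (α : ℝ)
    (x v : ℝ → H) (t : ℝ) : ℝ :=
  t ^ 2 * (f (x t) - f xstar) + ‖heavyBallAnchor α xstar x v t‖ ^ 2 / 2

variable {α t : ℝ} {xstar : H} {x v : ℝ → H}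

theorem hasDerivAt_heavyBallAnchor {G : H} (hx : HasDerivAt x (v t) t)
    (hv : HasDerivAt v (-(α / t) • v t - G) t) (ht : t ≠ 0) :
    HasDerivAt (heavyBallAnchor α xstar x v) (-(t • G)) t := by
  refine (((hx.sub_const xstar).const_smul (α - 1)).add
    ((hasDerivAt_id' t).smul hv)).congr_deriv ?_
  rw [smul_sub, smul_smul, mul_neg, mul_div_cancel₀ α ht]
  module

variable [CompleteSpace H] {f : H → ℝ}

theorem hasDerivAt_heavyBallEnergy (hf : DifferentiableAt ℝ f (x t))
    (hx : HasDerivAt x (v t) t) (hv : HasDerivAt v (-(α / t) • v t - gradient f (x t)) t)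
    (ht : t ≠ 0) :
    HasDerivAt (heavyBallEnergy f xstar α x v)
      (t * (2 * (f (x t) - f xstar) - (α - 1) * ⟪gradient f (x t), x t - xstar⟫)) t := by
  have hfx := hf.hasFDerivAt.comp_hasDerivAt t hx
  rw [← inner_gradient_left] at hfx
  refine (((hasDerivAt_pow 2 t).mul (hfx.sub_const (f xstar))).add
    ((hasDerivAt_heavyBallAnchor (xstar := xstar) hx hv ht).norm_sq.div_const 2)).congr_deriv ?_
  simp only [heavyBallAnchor, Function.comp_apply, inner_add_left, inner_neg_right,
    real_inner_smul_left, real_inner_smul_right, real_inner_comm (v t),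
    real_inner_comm (x t - xstar)]
  ring

theorem tendsto_heavyBallEnergy_nhdsGT_zero {x₀ : H} (hf : ContinuousAt f x₀)
    (hx0 : Tendsto x (𝓝[>] 0) (𝓝 x₀)) (hv0 : Tendsto (fun t => t • v t) (𝓝[>] 0) (𝓝 0)) :
    Tendsto (heavyBallEnergy f xstar α x v) (𝓝[>] 0) (𝓝 (‖(α - 1) • (x₀ - xstar)‖ ^ 2 / 2)) := by
  have hexcess : Tendsto (fun t => t ^ 2 * (f (x t) - f xstar)) (𝓝[>] 0) (𝓝 0) := by
    simpa using ((tendsto_nhdsWithin_of_tendsto_nhds tendsto_id).pow 2).mul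
      ((hf.tendsto.comp hx0).sub_const (f xstar))
  have hanchor : Tendsto (heavyBallAnchor α xstar x v) (𝓝[>] 0) (𝓝 ((α - 1) • (x₀ - xstar))) := by
    have := ((hx0.sub_const xstar).const_smul (α - 1)).add hv0
    rwa [add_zero] at this
  have := hexcess.add ((hanchor.norm.pow 2).div_const 2)
  rwa [zero_add] at this

end HeavyBall

/-- Integrability of `t·(f(x(t)) − inf f)` along the heavy ball ODE
`x'' = −(α/t)·x' − ∇f(x)` with `α > 3` on a real Hilbert space, for convex
differentiable `f` with minimizer `x*`, initial position `x(t) → x₀` and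
`t·x'(t) → 0` as `t → 0⁺`:
`∫₀^∞ t·(f(x(t)) − f(x*)) dt ≤ (α−1)²·‖x₀ − x*‖²/(2(α−3))`. -/
theorem heavy_ball_weighted_excess_integrable
    (H : Type*) [NormedAddCommGroup H] [InnerProductSpace ℝ H] [CompleteSpace H]
    (f : H → ℝ) (hconv : ConvexOn ℝ Set.univ f) (hdiff : Differentiable ℝ f)
    (xstar : H) (hmin : ∀ y, f xstar ≤ f y)
    (α : ℝ) (hα : 3 < α)
    (x v : ℝ → H)
    (hx : ∀ t > (0:ℝ), HasDerivAt x (v t) t)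
    (hv : ∀ t > (0:ℝ), HasDerivAt v (-(α / t) • v t - gradient f (x t)) t)
    (x₀ : H)
    (hx0 : Filter.Tendsto x (nhdsWithin 0 (Set.Ioi 0)) (nhds x₀))
    (hv0 : Filter.Tendsto (fun t : ℝ => t • v t) (nhdsWithin 0 (Set.Ioi 0)) (nhds 0)) :
    ∫⁻ t in Set.Ioi (0:ℝ), ENNReal.ofReal (t * (f (x t) - f xstar)) ≤
      ENNReal.ofReal ((α - 1) ^ 2 * ‖x₀ - xstar‖ ^ 2 / (2 * (α - 3))) := by
  have hα3 : 0 < α - 3 := by linarith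
  have hexcess : ∀ t, 0 ≤ f (x t) - f xstar := fun t => sub_nonneg.2 (hmin _)
  have hcont : ContinuousOn (fun t => t * (f (x t) - f xstar)) (Ioi 0) := fun t ht =>
    (continuousAt_id.mul ((hdiff.continuous.continuousAt.comp (hx t ht).continuousAt).sub
      continuousAt_const)).continuousWithinAt
  have hderiv : ∀ t > 0, t * (2 * (f (x t) - f xstar) - (α - 1) * ⟪gradient f (x t), x t - xstar⟫)
      ≤ -((α - 3) * (t * (f (x t) - f xstar))) := fun t ht => by
    have := hconv.sub_le_inner_gradient_sub (mem_univ _) (mem_univ xstar) (hdiff (x t))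
    nlinarith [mul_le_mul_of_nonneg_left this (mul_nonneg ht.le (by linarith : (0 : ℝ) ≤ α - 1))]
  have hbound : ∀ a b, 0 < a → a ≤ b → ∫ t in a..b, t * (f (x t) - f xstar) ≤
      ‖(α - 1) • (x₀ - xstar)‖ ^ 2 / 2 / (α - 3) := fun a b ha hab =>
    intervalIntegral_le_of_hasDerivAt_le_neg_of_tendsto
      (E := fun t => heavyBallEnergy f xstar α x v t / (α - 3))
      (fun t ht => (hasDerivAt_heavyBallEnergy (hdiff _) (hx t ht) (hv t ht) ht.ne').div_const _)
      (fun t ht => by rw [div_le_iff₀ hα3]; linarith [hderiv t ht])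
      hcont (fun t ht => mul_nonneg ht.le (hexcess t))
      (fun t _ => div_nonneg (add_nonneg (mul_nonneg (sq_nonneg t) (hexcess t)) (by positivity))
        hα3.le)
      ((tendsto_heavyBallEnergy_nhdsGT_zero hdiff.continuous.continuousAt hx0 hv0).div_const _)
      ha hab
  convert lintegral_Ioi_ofReal_le_of_intervalIntegral_le hcont
    (fun t ht => mul_nonneg ht.le (hexcess t)) hbound using 2
  rw [norm_smul, Real.norm_eq_abs, abs_of_pos (by linarith : (0 : ℝ) < α - 1), mul_pow, div_div]
end
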